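/- Let ε = exp(2πi/5), let S, V ∈ SL(2,ℂ) act on ℂ² by S(x,y) = (ε³x, ε²y) and V(x,y) = (−y, x), and define the degree-19 polynomial map η(x,y) = (−57x^15y^4 − 247x^10y^9 + 171x^5y^14 − y^19, x^19 + 171x^14y^5 + 247x^9y^10 − 57x^4y^15). Then η is equivariant under both matrices: η(S(x,y)) = S(η(x,y)) and η(V(x,y)) = V(η(x,y)), where on the right-hand sides S and V act by matrix-vector multiplication on the pair of component polynomials. -/
import Mathlib


open MvPolynomial

/-- Substitution of the linear map given by a 2×2 matrix `A` into a two-variable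
polynomial: `G(A·(x,y)) = G(ax+by, cx+dy)`. -/
noncomputable def subst (A : Matrix (Fin 2) (Fin 2) ℂ) (G : MvPolynomial (Fin 2) ℂ) :
    MvPolynomial (Fin 2) ℂ :=
  aeval (fun i => C (A i 0) * X 0 + C (A i 1) * X 1) G

/-- The fifth root of unity `ε = exp(2πi/5)`. -/
noncomputable def ε : ℂ := Complex.exp (2 * (Real.pi : ℂ) * Complex.I / 5)

/-- The diagonal icosahedral generator `S = [[ε³,0],[0,ε²]] ∈ SL(2,ℂ)`. -/
noncomputable def Smat : Matrix (Fin 2) (Fin 2) ℂ := !![ε ^ 3, 0; 0, ε ^ 2]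

/-- The quarter-turn generator `V = [[0,−1],[1,0]] ∈ SL(2,ℂ)`. -/
noncomputable def Vmat : Matrix (Fin 2) (Fin 2) ℂ := !![0, -1; 1, 0]

/-- First component of the degree-19 icosahedral equivariant `η`. -/
noncomputable def η₁ : MvPolynomial (Fin 2) ℂ :=
  -57 * (X 0) ^ 15 * (X 1) ^ 4 - 247 * (X 0) ^ 10 * (X 1) ^ 9
    + 171 * (X 0) ^ 5 * (X 1) ^ 14 - (X 1) ^ 19

/-- Second component of the degree-19 icosahedral equivariant `η`. -/
noncomputable def η₂ : MvPolynomial (Fin 2) ℂ :=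
  (X 0) ^ 19 + 171 * (X 0) ^ 14 * (X 1) ^ 5 + 247 * (X 0) ^ 9 * (X 1) ^ 10
    - 57 * (X 0) ^ 4 * (X 1) ^ 15

/-- `ε` is a fifth root of unity. -/
lemma hε5 : ε ^ 5 = 1 := by
  unfold ε
  rw [← Complex.exp_nat_mul]
  norm_num
  rw [show (5:ℂ) * (2 * (Real.pi : ℂ) * Complex.I / 5) = 2 * Real.pi * Complex.I by ring]
  exact Complex.exp_two_pi_mul_I

lemma CC : ∀ (a b : ℂ), a = b → (C a : MvPolynomial (Fin 2) ℂ) = C b := fun _ _ h => by rw [h]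

/-- The degree-19 map `η = (η₁, η₂)` is equivariant under the generators `S` and `V`:
`η(A·(x,y)) = A·(η(x,y))` for `A = S, V`, stated componentwise. -/
theorem η_equivariant_under_S_and_V :
    (subst Smat η₁ = C (Smat 0 0) * η₁ + C (Smat 0 1) * η₂ ∧
      subst Smat η₂ = C (Smat 1 0) * η₁ + C (Smat 1 1) * η₂) ∧
    (subst Vmat η₁ = C (Vmat 0 0) * η₁ + C (Vmat 0 1) * η₂ ∧
      subst Vmat η₂ = C (Vmat 1 0) * η₁ + C (Vmat 1 1) * η₂) := by
  have e00 : Smat 0 0 = ε ^ 3 := rfl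
  have e01 : Smat 0 1 = 0 := rfl
  have e10 : Smat 1 0 = 0 := rfl
  have e11 : Smat 1 1 = ε ^ 2 := rfl
  have v00 : Vmat 0 0 = 0 := rfl
  have v01 : Vmat 0 1 = -1 := rfl
  have v10 : Vmat 1 0 = 1 := rfl
  have v11 : Vmat 1 1 = 0 := rfl
  have h1 : (C ((ε^3)^15*(ε^2)^4) : MvPolynomial (Fin 2) ℂ) = C (ε^3) := CC _ _ (by
    rw [show (ε^3)^15*(ε^2)^4 = (ε^5)^10 * ε^3 by ring, hε5, one_pow, one_mul])
  have h2 : (C ((ε^3)^10*(ε^2)^9) : MvPolynomial (Fin 2) ℂ) = C (ε^3) := CC _ _ (by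
    rw [show (ε^3)^10*(ε^2)^9 = (ε^5)^9 * ε^3 by ring, hε5, one_pow, one_mul])
  have h3 : (C ((ε^3)^5*(ε^2)^14) : MvPolynomial (Fin 2) ℂ) = C (ε^3) := CC _ _ (by
    rw [show (ε^3)^5*(ε^2)^14 = (ε^5)^8 * ε^3 by ring, hε5, one_pow, one_mul])
  have h4 : (C ((ε^2)^19) : MvPolynomial (Fin 2) ℂ) = C (ε^3) := CC _ _ (by
    rw [show (ε^2)^19 = (ε^5)^7 * ε^3 by ring, hε5, one_pow, one_mul])
  have g1 : (C ((ε^3)^19) : MvPolynomial (Fin 2) ℂ) = C (ε^2) := CC _ _ (by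
    rw [show (ε^3)^19 = (ε^5)^11 * ε^2 by ring, hε5, one_pow, one_mul])
  have g2 : (C ((ε^3)^14*(ε^2)^5) : MvPolynomial (Fin 2) ℂ) = C (ε^2) := CC _ _ (by
    rw [show (ε^3)^14*(ε^2)^5 = (ε^5)^10 * ε^2 by ring, hε5, one_pow, one_mul])
  have g3 : (C ((ε^3)^9*(ε^2)^10) : MvPolynomial (Fin 2) ℂ) = C (ε^2) := CC _ _ (by
    rw [show (ε^3)^9*(ε^2)^10 = (ε^5)^9 * ε^2 by ring, hε5, one_pow, one_mul])
  have g4 : (C ((ε^3)^4*(ε^2)^15) : MvPolynomial (Fin 2) ℂ) = C (ε^2) := CC _ _ (by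
    rw [show (ε^3)^4*(ε^2)^15 = (ε^5)^8 * ε^2 by ring, hε5, one_pow, one_mul])
  simp only [map_mul, map_pow] at h1 h2 h3 h4 g1 g2 g3 g4
  refine ⟨⟨?_, ?_⟩, ?_, ?_⟩
  · simp only [subst, η₁, η₂, map_sub, map_add, map_mul, map_pow, map_neg, aeval_X, map_ofNat,
      e00, e01, e10, e11, map_zero, zero_mul, add_zero, zero_add, mul_pow]
    linear_combination (-57 * X 0 ^ 15 * X 1 ^ 4 : MvPolynomial (Fin 2) ℂ) * h1 +
      (-247 * X 0 ^ 10 * X 1 ^ 9 : MvPolynomial (Fin 2) ℂ) * h2 +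
      (171 * X 0 ^ 5 * X 1 ^ 14 : MvPolynomial (Fin 2) ℂ) * h3 +
      (-(X 1 ^ 19) : MvPolynomial (Fin 2) ℂ) * h4
  · simp only [subst, η₁, η₂, map_sub, map_add, map_mul, map_pow, map_neg, aeval_X, map_ofNat,
      e00, e01, e10, e11, map_zero, zero_mul, add_zero, zero_add, mul_pow]
    linear_combination (X 0 ^ 19 : MvPolynomial (Fin 2) ℂ) * g1 +
      (171 * X 0 ^ 14 * X 1 ^ 5 : MvPolynomial (Fin 2) ℂ) * g2 +
      (247 * X 0 ^ 9 * X 1 ^ 10 : MvPolynomial (Fin 2) ℂ) * g3 +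
      (-57 * X 0 ^ 4 * X 1 ^ 15 : MvPolynomial (Fin 2) ℂ) * g4
  · simp only [subst, η₁, η₂, map_sub, map_add, map_mul, map_pow, map_neg, aeval_X, map_ofNat,
      v00, v01, v10, v11, map_zero, map_one, zero_mul, add_zero, zero_add, one_mul, mul_pow]
    ring
  · simp only [subst, η₁, η₂, map_sub, map_add, map_mul, map_pow, map_neg, aeval_X, map_ofNat,
      v00, v01, v10, v11, map_zero, map_one, zero_mul, add_zero, zero_add, one_mul, mul_pow]
    ring
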